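/- Let G be a finite simple isolate-free graph with maximum degree Δ(G) = 3, and let Ψ be a total coalition partition of G. If V₁, V₂, V₃, V₄, V₅, V₆ are six pairwise distinct classes of Ψ such that V₁V₂, V₂V₃, V₃V₄, V₄V₅ and V₅V₆ are all total coalitions (i.e., they form a path on 6 vertices in the total coalition graph TCG(G,Ψ)), then V₂ ∪ V₅ is a total dominating set of G; hence V₂ and V₅ also form a total coalition. -/

import Mathlib

/-!
Suppose some vertex `v` has no neighbour in `V₂ ∪ V₅`. Since `V₁ ∪ V₂`, `V₂ ∪ V₃`, `V₄ ∪ V₅`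
and `V₅ ∪ V₆` are total dominating sets, `v` has a neighbour in each of `V₁`, `V₃`, `V₄`, `V₆`.
These are four distinct, hence disjoint, classes of the partition, so `v` has degree at least
four, contradicting `Δ(G) = 3`.
-/

open scoped Classical

variable {V : Type*}

/-- `S` is a total dominating set of `G`: every vertex of `G` has a neighbor in `S`. -/
def TotalDomSet (G : SimpleGraph V) (S : Finset V) : Prop :=
  ∀ v : V, ∃ u ∈ S, G.Adj v u

/-- Two disjoint sets `A`, `B` form a total coalition in `G` if neither is a total
dominating set but their union is. -/
def TotalCoalition [DecidableEq V] (G : SimpleGraph V) (A B : Finset V) : Prop :=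
  Disjoint A B ∧ ¬ TotalDomSet G A ∧ ¬ TotalDomSet G B ∧ TotalDomSet G (A ∪ B)

/-- A graph is isolate-free if every vertex has a neighbor. -/
def IsolateFree (G : SimpleGraph V) : Prop :=
  ∀ v : V, ∃ u : V, G.Adj v u

/-- `Ψ` is a total coalition partition of `G`: a partition of the vertex set into
nonempty classes, none of which is a total dominating set, such that every class
forms a total coalition with at least one other class. -/
def IsTCPartition [DecidableEq V] (G : SimpleGraph V) (Ψ : Finset (Finset V)) : Prop :=
  (∀ C ∈ Ψ, C.Nonempty) ∧
  (∀ v : V, ∃! C, C ∈ Ψ ∧ v ∈ C) ∧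
  (∀ C ∈ Ψ, ¬ TotalDomSet G C) ∧
  (∀ C ∈ Ψ, ∃ D ∈ Ψ, D ≠ C ∧ TotalCoalition G C D)

/-- The total coalition graph `TCG(G,Ψ)`: vertices are the classes of `Ψ`, and two
classes are adjacent iff they form a total coalition. -/
def TCG [DecidableEq V] (G : SimpleGraph V) (Ψ : Finset (Finset V)) :
    SimpleGraph {C // C ∈ Ψ} where
  Adj C D := C ≠ D ∧ TotalCoalition G (C : Finset V) (D : Finset V)
  symm := by
    refine ⟨?_⟩
    rintro C D ⟨hne, hd, hA, hB, hU⟩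
    exact ⟨hne.symm, hd.symm, hB, hA, by rwa [Finset.union_comm]⟩
  loopless := ⟨by rintro C ⟨hne, _⟩; exact hne rfl⟩

open Finset

theorem IsTCPartition.pairwiseDisjoint [DecidableEq V] {G : SimpleGraph V}
    {Ψ : Finset (Finset V)} (hΨ : IsTCPartition G Ψ) : (Ψ : Set (Finset V)).PairwiseDisjoint id := by
  intro A hA B hB hAB
  refine Finset.disjoint_left.2 fun v hvA hvB => hAB ?_
  obtain ⟨C, -, hC⟩ := hΨ.2.1 v
  exact (hC A ⟨hA, hvA⟩).trans (hC B ⟨hB, hvB⟩).symm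

theorem TotalDomSet.exists_adj_left_of_union [DecidableEq V] {G : SimpleGraph V}
    {A B : Finset V} (h : TotalDomSet G (A ∪ B)) {v : V} (hB : ∀ u ∈ B, ¬ G.Adj v u) :
    ∃ u ∈ A, G.Adj v u := by
  obtain ⟨u, hu, hvu⟩ := h v
  rcases mem_union.1 hu with huA | huB
  · exact ⟨u, huA, hvu⟩
  · exact absurd hvu (hB u huB)

theorem TotalDomSet.exists_adj_right_of_union [DecidableEq V] {G : SimpleGraph V}
    {A B : Finset V} (h : TotalDomSet G (A ∪ B)) {v : V} (hA : ∀ u ∈ A, ¬ G.Adj v u) :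
    ∃ u ∈ B, G.Adj v u :=
  (union_comm A B ▸ h).exists_adj_left_of_union hA

theorem SimpleGraph.card_le_degree_of_pairwiseDisjoint [Fintype V] (G : SimpleGraph V)
    [DecidableRel G.Adj] {𝒜 : Finset (Finset V)} (h𝒜 : (𝒜 : Set (Finset V)).PairwiseDisjoint id)
    {v : V} (hadj : ∀ A ∈ 𝒜, ∃ u ∈ A, G.Adj v u) : #𝒜 ≤ G.degree v := by
  choose f hfA hfadj using hadj
  let g : Finset V → V := fun A => if hA : A ∈ 𝒜 then f A hA else v
  have hg : ∀ A (hA : A ∈ 𝒜), g A = f A hA := fun A hA => dif_pos hA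
  rw [← G.card_neighborFinset_eq_degree]
  refine card_le_card_of_injOn g (fun A hA => ?_) (fun A hA B hB hAB => ?_)
  · simpa [hg A hA] using hfadj A hA
  · by_contra hne
    have hgB : g A ∈ B := hAB ▸ hg B hB ▸ hfA B hB
    exact Finset.disjoint_left.1 (h𝒜 hA hB hne) (hg A hA ▸ hfA A hA) hgB

theorem statement_17_general [Fintype V] [DecidableEq V]
    (G : SimpleGraph V) [DecidableRel G.Adj]
    (hΔ : G.maxDegree = 3)
    (Ψ : Finset (Finset V)) (hΨ : IsTCPartition G Ψ)
    (V₁ V₂ V₃ V₄ V₅ V₆ : Finset V)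
    (h1 : V₁ ∈ Ψ) (h2 : V₂ ∈ Ψ) (h3 : V₃ ∈ Ψ) (h4 : V₄ ∈ Ψ) (h5 : V₅ ∈ Ψ) (h6 : V₆ ∈ Ψ)
    (hdist : [V₁, V₂, V₃, V₄, V₅, V₆].Pairwise (· ≠ ·))
    (h12 : TotalCoalition G V₁ V₂) (h23 : TotalCoalition G V₂ V₃)
    (h45 : TotalCoalition G V₄ V₅)
    (h56 : TotalCoalition G V₅ V₆) :
    TotalDomSet G (V₂ ∪ V₅) ∧ TotalCoalition G V₂ V₅ := by
  have hTD : TotalDomSet G (V₂ ∪ V₅) := by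
    intro v
    by_contra! hv
    have hv₂ : ∀ u ∈ V₂, ¬ G.Adj v u := fun u hu => hv u (mem_union_left _ hu)
    have hv₅ : ∀ u ∈ V₅, ¬ G.Adj v u := fun u hu => hv u (mem_union_right _ hu)
    have hnodup : [V₁, V₃, V₄, V₆].Nodup := hdist.sublist (by simp)
    have hdeg : #([V₁, V₃, V₄, V₆].toFinset) ≤ G.degree v := by
      refine G.card_le_degree_of_pairwiseDisjoint (hΨ.pairwiseDisjoint.subset ?_) ?_
      · intro A hA
        simp only [List.coe_toFinset, List.mem_cons, List.not_mem_nil, or_false,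
          Set.mem_ofPred_eq] at hA
        rcases hA with rfl | rfl | rfl | rfl <;> assumption
      · intro A hA
        simp only [List.mem_toFinset, List.mem_cons, List.not_mem_nil, or_false] at hA
        rcases hA with rfl | rfl | rfl | rfl
        · exact h12.2.2.2.exists_adj_left_of_union hv₂
        · exact h23.2.2.2.exists_adj_right_of_union hv₂
        · exact h45.2.2.2.exists_adj_left_of_union hv₅
        · exact h56.2.2.2.exists_adj_right_of_union hv₅
    rw [List.toFinset_card_of_nodup hnodup] at hdeg
    have := G.degree_le_maxDegree v
    simp only [List.length_cons, List.length_nil] at hdeg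
    omega
  have hne : V₂ ≠ V₅ := List.rel_of_pairwise_cons (List.Pairwise.of_cons hdist) (by simp)
  exact ⟨hTD, hΨ.pairwiseDisjoint h2 h5 hne, hΨ.2.2.1 V₂ h2, hΨ.2.2.1 V₅ h5, hTD⟩

/-- If `Δ(G) = 3` and six pairwise distinct classes of a total coalition partition form
a path `V₁V₂V₃V₄V₅V₆` in the total coalition graph, then `V₂ ∪ V₅` is a total
dominating set, hence `V₂` and `V₅` form a total coalition. -/
theorem statement_17 [Fintype V] [DecidableEq V]
    (G : SimpleGraph V) [DecidableRel G.Adj] (hG : IsolateFree G)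
    (hΔ : G.maxDegree = 3)
    (Ψ : Finset (Finset V)) (hΨ : IsTCPartition G Ψ)
    (V₁ V₂ V₃ V₄ V₅ V₆ : Finset V)
    (h1 : V₁ ∈ Ψ) (h2 : V₂ ∈ Ψ) (h3 : V₃ ∈ Ψ) (h4 : V₄ ∈ Ψ) (h5 : V₅ ∈ Ψ) (h6 : V₆ ∈ Ψ)
    (hdist : [V₁, V₂, V₃, V₄, V₅, V₆].Pairwise (· ≠ ·))
    (h12 : TotalCoalition G V₁ V₂) (h23 : TotalCoalition G V₂ V₃)
    (h34 : TotalCoalition G V₃ V₄) (h45 : TotalCoalition G V₄ V₅)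
    (h56 : TotalCoalition G V₅ V₆) :
    TotalDomSet G (V₂ ∪ V₅) ∧ TotalCoalition G V₂ V₅ :=
  statement_17_general G hΔ Ψ hΨ V₁ V₂ V₃ V₄ V₅ V₆ h1 h2 h3 h4 h5 h6 hdist h12 h23 h45 h56
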